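/- arXiv:math/0506496 — 7 statements merged into one kernel-verified Lean document; each statement's English description precedes it below -/
import Mathlib

section
/- Let F(q) = Σ_{n≥0} f_n qⁿ be a formal power series over F₂ with f₀ = 1, let F̄(q) = Σ_{n≥0} f̄_n qⁿ be its inverse, and let F = {m ∈ ℕ : f_m = 1} (so 0 ∈ F). Then for every n ≥ 1, f̄_n = 1 if and only if the number of finitely supported sequences (x₀, x₁, x₂, …) of nonnegative integers with every x_i ∈ F and n = Σ_{i≥0} x_i·2^i is odd. -/
/-!
Let `G(q) = Σ gₙ qⁿ`, where `gₙ` counts the representations `n = Σ xᵢ 2ⁱ` with all `xᵢ ∈ F`.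
Splitting off the lowest digit `x₀` gives `G(q) = F(q) G(q²)`, and over `F₂` we have
`G(q²) = G(q)²`. Hence `F G` is idempotent with constant term `f₀ g₀ = 1`; as `F₂[[q]]` is a
domain, `F G = 1`, i.e. `G = F̄`.
-/

open PowerSeries
open Finset hiding mk

namespace DigitExpansion

variable (b : ℕ)

def value (x : ℕ →₀ ℕ) : ℕ := x.sum fun i xi => xi * b ^ i

def expansions (D : Set ℕ) (n : ℕ) : Set (ℕ →₀ ℕ) := {x | (∀ i, x i ∈ D) ∧ value b x = n}

noncomputable def cons (a : ℕ) (y : ℕ →₀ ℕ) : ℕ →₀ ℕ :=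
  Finsupp.single 0 a + y.embDomain (addRightEmbedding 1)

noncomputable def tail (x : ℕ →₀ ℕ) : ℕ →₀ ℕ :=
  x.comapDomain (· + 1) (add_left_injective 1).injOn

@[simp] lemma tail_apply (x : ℕ →₀ ℕ) (i : ℕ) : tail x i = x (i + 1) := rfl

@[simp] lemma cons_zero (a : ℕ) (y : ℕ →₀ ℕ) : cons a y 0 = a := by
  simp [cons, Finsupp.embDomain_of_notMem_range]

@[simp] lemma cons_succ (a : ℕ) (y : ℕ →₀ ℕ) (i : ℕ) : cons a y (i + 1) = y i := by
  simpa [cons] using Finsupp.embDomain_apply_self (addRightEmbedding 1) y i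

lemma cons_tail (x : ℕ →₀ ℕ) : cons (x 0) (tail x) = x := by
  ext (_ | i) <;> simp

lemma cons_injective (a : ℕ) : Function.Injective (cons a) := fun y y' h =>
  Finsupp.ext fun i => by simpa using DFunLike.congr_fun h (i + 1)

lemma value_cons (a : ℕ) (y : ℕ →₀ ℕ) : value b (cons a y) = a + b * value b y := by
  rw [value, cons, Finsupp.sum_add_index' (fun _ => zero_mul _) (fun _ _ _ => add_mul _ _ _),
    Finsupp.sum_single_index (zero_mul _), Finsupp.sum_embDomain, value, Finsupp.mul_sum]
  simp [pow_succ, mul_comm, mul_left_comm]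

lemma value_eq_add_mul_value_tail (x : ℕ →₀ ℕ) : value b x = x 0 + b * value b (tail x) := by
  conv_lhs => rw [← cons_tail x]
  exact value_cons b _ _

variable {b}

lemma apply_mul_pow_le_value (x : ℕ →₀ ℕ) (i : ℕ) : x i * b ^ i ≤ value b x := by
  by_cases hi : i ∈ x.support
  · exact Finset.single_le_sum (f := fun j => x j * b ^ j) (fun _ _ => Nat.zero_le _) hi
  · simp [Finsupp.notMem_support_iff.mp hi]

variable (D : Set ℕ)

lemma expansions_finite (hb : 1 < b) (n : ℕ) : (expansions b D n).Finite := by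
  refine (((range (n + 1)).finsupp fun _ => range (n + 1)).finite_toSet).subset ?_
  rintro x ⟨-, rfl⟩
  simp only [mem_coe, mem_finsupp_iff]
  refine ⟨fun i hi => ?_, fun i _ => ?_⟩ <;> rw [mem_range, Nat.lt_succ_iff]
  · calc i ≤ b ^ i := (Nat.lt_pow_self hb).le
      _ ≤ x i * b ^ i :=
        Nat.le_mul_of_pos_left _ (Nat.pos_of_ne_zero (Finsupp.mem_support_iff.mp hi))
      _ ≤ value b x := apply_mul_pow_le_value x i
  · exact (Nat.le_mul_of_pos_right _ (by positivity)).trans (apply_mul_pow_le_value x i)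

lemma expansions_zero (hb : 0 < b) (h0 : 0 ∈ D) : expansions b D 0 = {0} := by
  ext x
  refine ⟨fun ⟨_, hx⟩ => Finsupp.ext fun i => ?_, ?_⟩
  · have := apply_mul_pow_le_value (b := b) x i
    rw [hx, Nat.le_zero, mul_eq_zero] at this
    exact this.resolve_right (by positivity)
  · rintro rfl
    exact ⟨fun _ => h0, by simp [value]⟩

lemma ncard_expansions_eq_sum_fiber (hb : 1 < b) (n : ℕ) :
    (expansions b D n).ncard =
      ∑ p ∈ antidiagonal n, {x ∈ expansions b D n | x 0 = p.1}.ncard := by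
  classical
  have hfin := expansions_finite D hb n
  rw [Nat.sum_antidiagonal_eq_sum_range_succ_mk, Set.ncard_eq_toFinset_card _ hfin,
    card_eq_sum_card_fiberwise (f := fun x => x 0) (t := range (n + 1))]
  · refine sum_congr rfl fun a _ => ?_
    rw [← Set.ncard_coe_finset]
    congr 1
    ext x
    simp
  · intro x hx
    rw [Set.Finite.coe_toFinset] at hx
    have := apply_mul_pow_le_value (b := b) x 0
    rw [hx.2] at this
    simpa [Nat.lt_succ_iff] using this

open Classical in
lemma ncard_expansions_head_eq (hb : 0 < b) {a c : ℕ} :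
    {x ∈ expansions b D (a + c) | x 0 = a}.ncard =
      if a ∈ D ∧ b ∣ c then (expansions b D (c / b)).ncard else 0 := by
  split_ifs with h
  · obtain ⟨ha, m, rfl⟩ := h
    rw [Nat.mul_div_cancel_left m hb,
      ← Set.ncard_image_of_injective (expansions b D m) (cons_injective a)]
    congr 1
    ext x
    constructor
    · rintro ⟨⟨hD, hv⟩, rfl⟩
      rw [value_eq_add_mul_value_tail] at hv
      exact ⟨tail x, ⟨fun i => hD _, Nat.eq_of_mul_eq_mul_left hb (Nat.add_left_cancel hv)⟩,
        cons_tail x⟩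
    · rintro ⟨y, ⟨hD, rfl⟩, rfl⟩
      exact ⟨⟨fun | 0 => by simpa using ha | i + 1 => by simpa using hD i, value_cons b a y⟩,
        cons_zero a y⟩
  · convert Set.ncard_empty (ℕ →₀ ℕ)
    refine Set.eq_empty_of_forall_notMem fun x ⟨⟨hD, hv⟩, hx0⟩ => h ⟨hx0 ▸ hD 0, ?_⟩
    rw [value_eq_add_mul_value_tail, hx0] at hv
    exact ⟨_, (Nat.add_left_cancel hv).symm⟩

theorem mk_ncard_expansions {R : Type*} [CommRing R] (hb : 1 < b) :
    mk (fun n => ((expansions b D n).ncard : R)) =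
      mk (D.indicator 1) * expand b (by omega) (mk fun n => ((expansions b D n).ncard : R)) := by
  classical
  ext n
  rw [coeff_mk, coeff_mul, ncard_expansions_eq_sum_fiber D hb, Nat.cast_sum]
  refine sum_congr rfl fun ⟨a, c⟩ hp => ?_
  obtain rfl : a + c = n := mem_antidiagonal.mp hp
  rw [ncard_expansions_head_eq D (by omega), coeff_mk, coeff_expand, coeff_mk]
  by_cases ha : a ∈ D <;> by_cases hc : b ∣ c <;> simp [ha, hc]

end DigitExpansion

theorem PowerSeries.expand_zmod_eq_pow {p : ℕ} [Fact p.Prime] (φ : PowerSeries (ZMod p)) :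
    expand p (Fact.out : p.Prime).ne_zero φ = φ ^ p := by
  have h := MvPowerSeries.map_frobenius_expand p (Fact.out : p.Prime).ne_zero (f := φ)
  rw [ZMod.frobenius_zmod, MvPowerSeries.map_id] at h
  exact h

theorem mul_eq_one_of_eq_mul_sq {M : Type*} [CommMonoidWithZero M] [IsLeftCancelMulZero M]
    {a g : M} (h : g = a * g ^ 2) (hne : a * g ≠ 0) : a * g = 1 := by
  have : IsIdempotentElem (a * g) :=
    calc a * g * (a * g) = a * (a * g ^ 2) := by rw [sq]; ac_rfl
      _ = a * g := by rw [← h]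
  exact (IsIdempotentElem.iff_eq_zero_or_one.mp this).resolve_left hne

theorem ZMod.indicator_setOf_eq_one {α : Type*} (f : α → ZMod 2) :
    {a | f a = 1}.indicator 1 = f := by
  classical
  funext a
  rw [Set.indicator_apply]
  split_ifs with h
  · exact h.symm
  · change ¬ f a = 1 at h
    generalize f a = y at h ⊢
    revert y
    decide

theorem stmt3_general (f fbar : ℕ → ZMod 2) (hf0 : f 0 = 1)
    (hinv : PowerSeries.mk f * PowerSeries.mk fbar = 1) (n : ℕ) :
    fbar n = 1 ↔
      Odd (Set.ncard {x : ℕ →₀ ℕ |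
        (∀ i : ℕ, f (x i) = 1) ∧ (x.sum fun i xi => xi * 2 ^ i) = n}) := by
  set G := mk fun n => ((DigitExpansion.expansions 2 {m | f m = 1} n).ncard : ZMod 2)
  have hF : mk f ≠ 0 := fun h => by simp [h] at hinv
  have hG : G = mk f * G ^ 2 := by
    rw [← expand_zmod_eq_pow, ← ZMod.indicator_setOf_eq_one f]
    exact DigitExpansion.mk_ncard_expansions _ one_lt_two
  have hFG : mk f * G = 1 := by
    refine mul_eq_one_of_eq_mul_sq hG fun h => ?_
    simpa [G, DigitExpansion.expansions_zero {m | f m = 1} two_pos hf0, hf0] using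
      congrArg constantCoeff h
  have hfbar : mk fbar = G := mul_left_cancel₀ hF (hinv.trans hFG.symm)
  rw [← ZMod.natCast_eq_one_iff_odd, ← coeff_mk n fbar, hfbar, coeff_mk]
  rfl

/-- Let `F(q) = Σ f_n qⁿ ∈ F₂[[q]]` with `f₀ = 1`, with inverse `F̄(q) = Σ f̄_n qⁿ`, and let
`F = {m : f_m = 1}` (so `0 ∈ F`). For every `n ≥ 1`, `f̄_n = 1` iff the number of finitely
supported sequences `(x₀, x₁, …)` of nonnegative integers with every `x_i ∈ F` and
`n = Σ_i x_i 2^i` is odd. -/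
theorem stmt3 (f fbar : ℕ → ZMod 2) (hf0 : f 0 = 1)
    (hinv : PowerSeries.mk f * PowerSeries.mk fbar = 1) (n : ℕ) (hn : 1 ≤ n) :
    fbar n = 1 ↔
      Odd (Set.ncard {x : ℕ →₀ ℕ |
        (∀ i : ℕ, f (x i) = 1) ∧ (x.sum fun i xi => xi * 2 ^ i) = n}) :=
  stmt3_general f fbar hf0 hinv n
end

section
/- Let X₁, X₂, X₃, … be independent random variables with X_i taking the value 0 with probability γ_i and the value 1 with probability 1 − γ_i. Then lim_{n→∞} ℙ(Σ_{i=1}^{n} X_i ≡ 0 (mod 2)) = 1/2 if and only if either γ_i = 1/2 for some i, or the series Σ_{i=1}^{∞} min{γ_i, 1 − γ_i} diverges. -/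
/-!
Write `S_n = X₀ + ⋯ + X_{n-1}`. Then `𝔼[(-1)^{S_n}] = 2 ℙ(S_n even) - 1`, and by independence
this expectation factors as `∏_{i<n} 𝔼[(-1)^{X_i}] = ∏_{i<n} (2γ_i - 1)`. So the parity tends to
be fair iff this product tends to `0`. For factors `a_i ∈ [-1, 1]` that happens iff some `a_i = 0`
or `∑ (1 - |a_i|)` diverges: divergence forces `∏ |a_i| ≤ exp (-∑ (1 - |a_i|)) → 0`, while
convergence with nonzero factors makes `∑ log |a_i|` converge. Finally
`1 - |2γ - 1| = 2 min γ (1 - γ)`.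
-/

open MeasureTheory ProbabilityTheory Filter Topology Finset

namespace Real

theorem prod_le_exp_neg_sum_one_sub {ι : Type*} (s : Finset ι) {b : ι → ℝ}
    (hb : ∀ i, 0 ≤ b i) : ∏ i ∈ s, b i ≤ exp (-∑ i ∈ s, (1 - b i)) := by
  rw [← sum_neg_distrib, exp_sum]
  exact prod_le_prod (fun i _ => hb i) fun i _ => by linarith [add_one_le_exp (-(1 - b i))]

theorem tendsto_prod_range_zero_of_not_summable_one_sub {b : ℕ → ℝ}
    (hb : ∀ i, b i ∈ Set.Icc 0 1) (hs : ¬ Summable fun i => 1 - b i) :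
    Tendsto (fun n => ∏ i ∈ range n, b i) atTop (𝓝 0) := by
  have hdiv : Tendsto (fun n => ∑ i ∈ range n, (1 - b i)) atTop atTop :=
    (not_summable_iff_tendsto_nat_atTop_of_nonneg fun i => sub_nonneg.2 (hb i).2).1 hs
  exact squeeze_zero (fun n => prod_nonneg fun i _ => (hb i).1)
    (fun n => prod_le_exp_neg_sum_one_sub _ fun i => (hb i).1)
    (tendsto_exp_atBot.comp (tendsto_neg_atTop_atBot.comp hdiv))

theorem exists_hasProd_exp_of_summable_one_sub {ι : Type*} {b : ι → ℝ} (hb : ∀ i, 0 < b i)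
    (hs : Summable fun i => 1 - b i) : ∃ a, HasProd b (exp a) := by
  have hlog : Summable fun i => log (1 + (b i - 1)) :=
    summable_log_one_add_of_summable (by simpa using hs.neg)
  simp only [add_sub_cancel] at hlog
  exact ⟨_, hasProd_of_hasSum_log hb hlog.hasSum⟩

theorem tendsto_prod_range_zero_iff_of_mem_Icc {b : ℕ → ℝ} (hb : ∀ i, b i ∈ Set.Icc 0 1) :
    Tendsto (fun n => ∏ i ∈ range n, b i) atTop (𝓝 0) ↔
      (∃ i, b i = 0) ∨ ¬ Summable fun i => 1 - b i := by
  refine ⟨fun h => ?_, ?_⟩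
  · by_contra! hc
    obtain ⟨a, ha⟩ := exists_hasProd_exp_of_summable_one_sub
      (fun i => lt_of_le_of_ne (hb i).1 (hc.1 i).symm) hc.2
    exact exp_ne_zero a (tendsto_nhds_unique ha.tendsto_prod_nat h)
  · rintro (⟨i, hi⟩ | hs)
    · refine tendsto_const_nhds.congr' ?_
      filter_upwards [eventually_gt_atTop i] with n hn
      exact (prod_eq_zero (mem_range.2 hn) hi).symm
    · exact tendsto_prod_range_zero_of_not_summable_one_sub hb hs

theorem tendsto_prod_range_zero_iff_of_abs_le_one {a : ℕ → ℝ} (ha : ∀ i, |a i| ≤ 1) :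
    Tendsto (fun n => ∏ i ∈ range n, a i) atTop (𝓝 0) ↔
      (∃ i, a i = 0) ∨ ¬ Summable fun i => 1 - |a i| := by
  rw [tendsto_zero_iff_abs_tendsto_zero]
  simp only [Function.comp_def, abs_prod, ← abs_eq_zero (a := a _)]
  exact tendsto_prod_range_zero_iff_of_mem_Icc fun i => ⟨abs_nonneg _, ha i⟩

end Real

theorem one_sub_abs_two_mul_sub_one (x : ℝ) : 1 - |2 * x - 1| = 2 * min x (1 - x) := by
  rcases le_total x (1 / 2) with hx | hx
  · rw [abs_of_nonpos (by linarith), min_eq_left (by linarith)]; ring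
  · rw [abs_of_nonneg (by linarith), min_eq_right (by linarith)]; ring

theorem tendsto_nhds_half_iff_two_mul_sub_one {α : Type*} {l : Filter α} {f : α → ℝ} :
    Tendsto f l (𝓝 (1 / 2)) ↔ Tendsto (fun x => 2 * f x - 1) l (𝓝 0) := by
  have h := tendsto_const_smul_iff₀ (f := f) (l := l) (a := 1 / 2) (two_ne_zero' ℝ)
  simp only [smul_eq_mul] at h
  rw [← h, ← tendsto_sub_const_iff 1]
  norm_num

namespace ProbabilityTheory

variable {Ω : Type*} [MeasurableSpace Ω] {μ : Measure Ω}

theorem integral_neg_one_pow [IsProbabilityMeasure μ] {f : Ω → ℕ} (hf : Measurable f) :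
    ∫ ω, (-1 : ℝ) ^ f ω ∂μ = 2 * μ.real {ω | Even (f ω)} - 1 := by
  set E := {ω | Even (f ω)}
  have hE : MeasurableSet E := hf (MeasurableSet.of_discrete (s := {k | Even k}))
  have hpow : (fun ω => (-1 : ℝ) ^ f ω) = fun ω => 2 * E.indicator 1 ω - 1 := by
    funext ω
    rcases Nat.even_or_odd (f ω) with h | h
    · rw [h.neg_one_pow, Set.indicator_of_mem (show ω ∈ E from h)]
      norm_num
    · rw [h.neg_one_pow, Set.indicator_of_notMem (show ω ∉ E from Nat.not_even_iff_odd.2 h)]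
      norm_num
  have hint : Integrable (E.indicator (1 : Ω → ℝ)) μ :=
    (integrable_indicator_iff hE).2 (integrable_const 1).integrableOn
  rw [hpow, integral_sub (hint.const_mul 2) (integrable_const 1), integral_const_mul,
    integral_indicator_one hE]
  simp

theorem iIndepFun.integral_finset_prod {ι : Type*} {Y : ι → Ω → ℝ} (hY : iIndepFun Y μ)
    (mY : ∀ i, AEStronglyMeasurable (Y i) μ) (s : Finset ι) :
    ∫ ω, ∏ i ∈ s, Y i ω ∂μ = ∏ i ∈ s, ∫ ω, Y i ω ∂μ := by
  have := (hY.precomp (g := ((↑) : s → ι)) Subtype.val_injective).integral_fun_prod_eq_prod_integral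
    fun i => mY i
  simpa only [fun ω => prod_coe_sort s (Y · ω), prod_coe_sort s (fun i => ∫ ω, Y i ω ∂μ)]
    using this

theorem iIndepFun.two_mul_measureReal_even_sum_sub_one [IsProbabilityMeasure μ] {ι : Type*}
    {X : ι → Ω → ℕ} (hX : iIndepFun X μ) (mX : ∀ i, Measurable (X i)) (s : Finset ι) :
    2 * μ.real {ω | Even (∑ i ∈ s, X i ω)} - 1 =
      ∏ i ∈ s, (2 * μ.real {ω | Even (X i ω)} - 1) := by
  have hY : iIndepFun (fun i ω => (-1 : ℝ) ^ X i ω) μ :=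
    hX.comp (fun _ k => (-1 : ℝ) ^ k) fun _ => measurable_from_nat
  rw [← integral_neg_one_pow (Finset.measurable_fun_sum s fun i _ => mX i)]
  simp_rw [← integral_neg_one_pow (mX _), ← prod_pow_eq_pow_sum]
  exact hY.integral_finset_prod (fun i => (measurable_from_nat.comp (mX i)).aestronglyMeasurable) s

end ProbabilityTheory

/-- Binary central limit theorem: let `X 0, X 1, …` (representing `X₁, X₂, …`) be
independent `{0,1}`-valued random variables with `ℙ(X i = 0) = γ i`.  Then
`ℙ(X₁ + ⋯ + Xₙ ≡ 0 (mod 2)) → 1/2` as `n → ∞` iff some `γ i = 1/2` or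
`Σ min{γ i, 1 - γ i}` diverges. -/
theorem stmt6 {Ω : Type*} [MeasurableSpace Ω] (μ : Measure Ω) [IsProbabilityMeasure μ]
    (X : ℕ → Ω → ℕ)
    (hmeas : ∀ i, Measurable (X i))
    (h01 : ∀ i ω, X i ω ≤ 1)
    (hind : iIndepFun X μ)
    (γ : ℕ → ℝ) (hγ : ∀ i, γ i = (μ {ω | X i ω = 0}).toReal) :
    Tendsto (fun n : ℕ => (μ {ω | Even (∑ i ∈ Finset.range n, X i ω)}).toReal)
        atTop (nhds (1 / 2)) ↔
      (∃ i, γ i = 1 / 2) ∨ ¬ Summable (fun i => min (γ i) (1 - γ i)) := by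
  have hγ_even : ∀ i, γ i = μ.real {ω | Even (X i ω)} := fun i => by
    rw [hγ i, ← measureReal_def]
    congr 1
    ext ω
    have := h01 i ω
    simp only [Set.mem_ofPred_eq, Nat.even_iff]
    omega
  have hbias : ∀ n, 2 * μ.real {ω | Even (∑ i ∈ range n, X i ω)} - 1 =
      ∏ i ∈ range n, (2 * γ i - 1) :=
    fun n => by simpa only [hγ_even] using hind.two_mul_measureReal_even_sum_sub_one hmeas (range n)
  have hγ_abs : ∀ i, |2 * γ i - 1| ≤ 1 := fun i => by
    rw [abs_le, hγ_even]
    constructor <;> linarith [measureReal_nonneg (μ := μ) (s := {ω | Even (X i ω)}),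
      measureReal_le_one (μ := μ) (s := {ω | Even (X i ω)})]
  simp only [← measureReal_def, tendsto_nhds_half_iff_two_mul_sub_one, hbias,
    Real.tendsto_prod_range_zero_iff_of_abs_le_one hγ_abs, one_sub_abs_two_mul_sub_one,
    summable_mul_left_iff (two_ne_zero' ℝ), sub_eq_zero]
  exact or_congr_left (exists_congr fun i => by constructor <;> intro <;> linarith)
end

section
/- Let P be a polynomial over F₂ with P(0) = 1 and deg(P) ≥ 1, let D = ord(P) be the least positive integer with P dividing 1 + q^D, and let P* be the polynomial with P·P* = 1 + q^D. Let P̄ = {n ∈ ℕ : f̄_n = 1}, where Σ f̄_n qⁿ is the inverse of P in F₂[[q]]. Then the natural density of P̄ exists and equals ℓ(P*)/ord(P), where ℓ(P*) is the number of nonzero coefficients of P*. -/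
/-!
Multiplying `P * G = 1` by `P*` gives `(1 + q^D) * G = P*` with `deg P* < D`, so in characteristic
two `G = P* (1 + q^D + q^{2D} + ⋯)`: its coefficient sequence is periodic of period `D`, and one
period is the coefficient list of `P*`. A periodic set has density equal to its count in one
period divided by the period.
-/

open Filter Function Finset Topology

namespace Nat

variable {p : ℕ → Prop} [DecidablePred p] {a : ℕ}

theorem count_mul_add_of_periodic (hp : Periodic p a) (q r : ℕ) :
    count p (a * q + r) = q * count p a + count p r := by
  have hshift : (fun k ↦ p (a + k)) = p := funext fun k ↦ by rw [add_comm]; exact hp k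
  induction q generalizing r with
  | zero => simp
  | succ q ih =>
    rw [show a * (q + 1) + r = a + (a * q + r) by ring, count_add]
    simp only [hshift, ih]
    ring

theorem tendsto_count_div_of_periodic (hp : Periodic p a) (ha : 0 < a) :
    Tendsto (fun n : ℕ ↦ (count p n : ℝ) / n) atTop (𝓝 ((count p a : ℝ) / a)) := by
  rw [← tendsto_sub_nhds_zero_iff]
  refine squeeze_zero_norm' ?_ (tendsto_const_div_atTop_nhds_zero_nat (a : ℝ))
  filter_upwards [eventually_gt_atTop 0] with n hn
  set r := n % a
  have hcount : count p n = n / a * count p a + count p r := by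
    conv_lhs => rw [← Nat.div_add_mod n a]
    exact count_mul_add_of_periodic hp _ _
  have hn_eq : (n : ℝ) = a * (n / a : ℕ) + r := by exact_mod_cast (Nat.div_add_mod n a).symm
  have hcr : (count p r : ℝ) ≤ r := by exact_mod_cast count_le _
  have hca : (count p a : ℝ) ≤ a := by exact_mod_cast count_le _
  have hra : (r : ℝ) < a := by exact_mod_cast Nat.mod_lt n ha
  have haR : (0 : ℝ) < a := by exact_mod_cast ha
  have hnR : (0 : ℝ) < n := by exact_mod_cast hn
  -- only the incomplete last period contributes to the error
  have herror : (count p n : ℝ) / n - count p a / a = (a * count p r - count p a * r) / (a * n) := by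
    field_simp
    rw [hcount, hn_eq]
    push_cast
    ring
  rw [Real.norm_eq_abs, herror, abs_div, abs_of_pos (mul_pos haR hnR),
    ← mul_div_mul_left (a : ℝ) n haR.ne']
  gcongr
  rw [abs_le]
  constructor <;> nlinarith [(count p r).cast_nonneg (α := ℝ), (count p a).cast_nonneg (α := ℝ),
    r.cast_nonneg (α := ℝ)]

end Nat

namespace Polynomial

variable {R : Type*}

theorem natDegree_lt_of_mul_eq [Semiring R] [NoZeroDivisors R] {P Q S : R[X]}
    (hP : 1 ≤ P.natDegree) (h : P * Q = S) (hS : S ≠ 0) : Q.natDegree < S.natDegree := by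
  have hP0 : P ≠ 0 := by rintro rfl; simp at hP
  have hQ0 : Q ≠ 0 := by rintro rfl; exact hS (by rw [← h, mul_zero])
  rw [← h, natDegree_mul hP0 hQ0]
  omega

theorem card_support_eq_count_coeff_ne_zero [Semiring R] [DecidableEq R] {Q : R[X]} {D : ℕ}
    (hQ : Q.natDegree < D) : #Q.support = Nat.count (fun k ↦ Q.coeff k ≠ 0) D := by
  rw [Nat.count_eq_card_filter_range]
  congr 1
  ext k
  simp only [mem_support_iff, mem_filter, mem_range, iff_and_self]
  exact fun hk ↦ (le_natDegree_of_ne_zero hk).trans_lt hQ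

end Polynomial

namespace PowerSeries

theorem coeff_eq_coeff_mod_of_one_sub_X_pow_mul_eq {R : Type*} [CommRing R] {D : ℕ} {G : R⟦X⟧}
    {Q : Polynomial R} (hQ : Q.natDegree < D) (h : (1 - X ^ D) * G = (Q : R⟦X⟧)) (k : ℕ) :
    coeff k G = Q.coeff (k % D) := by
  have hcoeff : ∀ n, coeff n G - coeff n (X ^ D * G) = Q.coeff n := fun n ↦ by
    simpa [sub_mul, Polynomial.coeff_coe] using congrArg (coeff n) h
  have hper : Periodic (fun n ↦ coeff n G) D := fun n ↦ by
    have hn := hcoeff (n + D)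
    rwa [coeff_X_pow_mul, Q.coeff_eq_zero_of_natDegree_lt (by omega), sub_eq_zero] at hn
  have hlow := hcoeff (k % D)
  rw [coeff_X_pow_mul', if_neg (Nat.mod_lt k (by omega)).not_ge, sub_zero] at hlow
  rw [← hper.map_mod_nat k, hlow]

end PowerSeries

theorem stmt8_general (P Pstar : Polynomial (ZMod 2)) (hPdeg : 1 ≤ P.natDegree)
    (D : ℕ) (hD1 : 1 ≤ D)
    (hPstar : P * Pstar = 1 + Polynomial.X ^ D)
    (G : PowerSeries (ZMod 2)) (hG : (P : PowerSeries (ZMod 2)) * G = 1) :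
    Filter.Tendsto
      (fun n : ℕ =>
        (((Finset.range (n + 1)).filter fun k => PowerSeries.coeff k G = 1).card : ℝ)
          / (n + 1))
      Filter.atTop (nhds ((Pstar.support.card : ℝ) / D)) := by
  have hdegX : (1 + Polynomial.X ^ D : Polynomial (ZMod 2)).natDegree = D := by
    rw [add_comm, ← Polynomial.C_1, Polynomial.natDegree_X_pow_add_C]
  have hdeg : Pstar.natDegree < D := hdegX ▸ Polynomial.natDegree_lt_of_mul_eq hPdeg hPstar
    fun h ↦ by rw [h, Polynomial.natDegree_zero] at hdegX; omega
  have hinv : (1 - PowerSeries.X ^ D) * G = (Pstar : PowerSeries (ZMod 2)) := by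
    calc (1 - PowerSeries.X ^ D) * G = ((P * Pstar : Polynomial (ZMod 2)) : PowerSeries _) * G := by
          rw [hPstar, ← CharTwo.sub_eq_add]; push_cast; rfl
      _ = Pstar * (P * G) := by push_cast; ring
      _ = Pstar := by rw [hG, mul_one]
  have hcoeff := PowerSeries.coeff_eq_coeff_mod_of_one_sub_X_pow_mul_eq hdeg hinv
  have hper : Periodic (fun k ↦ PowerSeries.coeff k G = 1) D := fun k ↦ by
    simp only [hcoeff, Nat.add_mod_right]
  have hcount : Nat.count (fun k ↦ PowerSeries.coeff k G = 1) D = #Pstar.support := by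
    rw [Polynomial.card_support_eq_count_coeff_ne_zero hdeg, Nat.count_eq_card_filter_range,
      Nat.count_eq_card_filter_range]
    refine congrArg card (filter_congr fun k hk ↦ ?_)
    rw [hcoeff, Nat.mod_eq_of_lt (mem_range.mp hk)]
    generalize Pstar.coeff k = c
    decide +revert
  have hdensity := (Nat.tendsto_count_div_of_periodic hper hD1).comp (tendsto_add_atTop_nat 1)
  rw [hcount] at hdensity
  refine hdensity.congr fun n ↦ ?_
  simp [Nat.count_eq_card_filter_range]

/-- Let `P ∈ F₂[q]` with `P(0) = 1` and `deg P ≥ 1`, let `D = ord(P)` be the least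
positive integer with `P ∣ 1 + q^D`, and let `P*` satisfy `P ⬝ P* = 1 + q^D`.
Let `G = Σ f̄_n qⁿ` be the inverse of `P` in `F₂[[q]]`.  Then the natural density of
`P̄ = {n : f̄_n = 1}` exists and equals `ℓ(P*)/ord(P)`, where `ℓ(P*)` is the number of
nonzero coefficients of `P*`. -/
theorem stmt8 (P Pstar : Polynomial (ZMod 2)) (hP0 : P.coeff 0 = 1) (hPdeg : 1 ≤ P.natDegree)
    (D : ℕ) (hD1 : 1 ≤ D) (hDdvd : P ∣ (1 + Polynomial.X ^ D))
    (hDmin : ∀ e : ℕ, 1 ≤ e → P ∣ (1 + Polynomial.X ^ e) → D ≤ e)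
    (hPstar : P * Pstar = 1 + Polynomial.X ^ D)
    (G : PowerSeries (ZMod 2)) (hG : (P : PowerSeries (ZMod 2)) * G = 1) :
    Filter.Tendsto
      (fun n : ℕ =>
        (((Finset.range (n + 1)).filter fun k => PowerSeries.coeff k G = 1).card : ℝ)
          / (n + 1))
      Filter.atTop (nhds ((Pstar.support.card : ℝ) / D)) :=
  stmt8_general P Pstar hPdeg D hD1 hPstar G hG
end

section
/- Let P be a polynomial over F₂ with P(0) = 1, suppose D := ord(P) ≥ 4, and let P* be the polynomial with P·P* = 1 + q^D. Let P̄ and P̄* denote the reciprocal sets of P and P* respectively. Then min{δ(P̄), δ(P̄*)} ≤ 1/2, i.e. at least one of the two natural densities is at most 1/2. -/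
/-!
Since `P * P* = 1 + q^D`, the inverse `1/P = P*/(1 + q^D)` has coefficients that are periodic
with period `D` from index `1` on, and on one period they are the coefficients of `P*` (with
index `D` standing in for the constant term). Hence `δ(P̄) ≤ |supp P*| / D` and symmetrically
`δ(P̄*) ≤ |supp P| / D`.

If both densities exceeded `1/2`, then, as `deg P + deg P* = D`, the factor `Q` of smaller
degree `d` would have all its `d + 1` coefficients equal to `1`, i.e. `Q (1 + q) = 1 + q^(d+1)`.
For `Q = P` this contradicts the minimality of `D`, as `d + 1 < D`. For `Q = P*` we get
`D = 2d + 1`, and then `1 + q = (1 + q^(d+1))^2 + q (1 + q^D)` is divisible by `P*`, so `D ≤ 3`.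
-/

open Finset Filter Function Polynomial Topology

section Density

theorem tendsto_div_of_abs_sub_mul_le {𝕜 α : Type*} [Field 𝕜] [LinearOrder 𝕜]
    [IsStrictOrderedRing 𝕜] [TopologicalSpace 𝕜] [OrderTopology 𝕜] {l : Filter α}
    {f g : α → 𝕜} {L C : 𝕜} (hg : Tendsto g l atTop) (h : ∀ x, |f x - L * g x| ≤ C) :
    Tendsto (fun x => f x / g x) l (𝓝 L) := by
  have herr : Tendsto (fun x => (f x - L * g x) / g x) l (𝓝 0) :=
    tendsto_bdd_div_atTop_nhds_zero (.of_forall fun x => (abs_le.mp (h x)).1)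
      (.of_forall fun x => (abs_le.mp (h x)).2) hg
  refine (by simpa using herr.const_add L : Tendsto _ l (𝓝 L)).congr' ?_
  filter_upwards [hg.eventually_ne_atTop 0] with x hx
  field_simp
  ring

namespace Nat

variable {p : ℕ → Prop} [DecidablePred p] {a : ℕ}

theorem count_add_of_periodic (hp : Periodic p a) (n : ℕ) :
    count p (n + a) = count p n + count p a := by
  have hshift : (fun k => p (k + a)) = p := funext hp
  simp only [count_add', hshift]

theorem abs_count_sub_le_of_periodic (hp : Periodic p a) (ha : 0 < a) (n : ℕ) :
    |(count p n : ℝ) - count p a / a * n| ≤ a := by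
  set f : ℕ → ℝ := fun n => count p n - count p a / a * n
  have hf : Periodic f a := fun n => by
    simp only [f, count_add_of_periodic hp, cast_add]
    field_simp
    ring
  change |f n| ≤ a
  rw [← hf.map_mod_nat n]
  have hr : ((n % a : ℕ) : ℝ) < a := by exact_mod_cast mod_lt n ha
  have hcount : (count p (n % a) : ℝ) ≤ (n % a : ℕ) := by exact_mod_cast count_le p
  have hdensity : (count p a : ℝ) / a ≤ 1 :=
    div_le_one_of_le₀ (by exact_mod_cast count_le p) (cast_nonneg a)
  have hterm : (count p a : ℝ) / a * (n % a : ℕ) ≤ (n % a : ℕ) :=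
    mul_le_of_le_one_left (cast_nonneg _) hdensity
  have hterm_nonneg : 0 ≤ (count p a : ℝ) / a * (n % a : ℕ) := by positivity
  rw [abs_le]
  constructor <;> simp only [f] <;> linarith [(count p (n % a)).cast_nonneg (α := ℝ)]

theorem tendsto_count_div_of_periodic_add {N : ℕ} (hp : Periodic (fun k => p (k + N)) a)
    (ha : 0 < a) :
    Tendsto (fun n => (count p n : ℝ) / n) atTop
      (𝓝 (count (fun k => p (k + N)) a / a)) := by
  set c : ℝ := count (fun k => p (k + N)) a / a
  rw [← tendsto_add_atTop_iff_nat N]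
  refine tendsto_div_of_abs_sub_mul_le (C := a + count p N + c * N)
    (tendsto_natCast_atTop_atTop.comp (tendsto_add_atTop_nat N)) fun n => ?_
  have hperiod := abs_count_sub_le_of_periodic hp ha n
  have hc : 0 ≤ c * N := by positivity
  simp only [count_add', cast_add] at hperiod ⊢
  rw [abs_le] at hperiod ⊢
  constructor <;> linarith [(count p N).cast_nonneg (α := ℝ)]

end Nat

end Density

namespace Polynomial

theorem natDegree_one_add_X_pow {R : Type*} [Semiring R] [Nontrivial R] (D : ℕ) :
    (1 + X ^ D : R[X]).natDegree = D := by
  rw [add_comm, ← C_1, natDegree_X_pow_add_C]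

theorem one_add_X_pow_ne_zero {R : Type*} [Semiring R] [Nontrivial R] {D : ℕ}
    (hD : 0 < D) : (1 + X ^ D : R[X]) ≠ 0 := fun h => by
  have hdeg := natDegree_one_add_X_pow (R := R) D
  rw [h, natDegree_zero] at hdeg
  omega

theorem ZMod2.eq_geom_sum_of_natDegree_lt_card_support {Q : (ZMod 2)[X]}
    (hQ : Q.natDegree < #Q.support) : Q = ∑ i ∈ range (Q.natDegree + 1), X ^ i := by
  have hsupp : Q.support = range (Q.natDegree + 1) :=
    eq_of_subset_of_card_le supp_subset_range_natDegree_succ (by simpa using hQ)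
  have hcoeff : ∀ i ∈ Q.support, Q.coeff i = 1 := fun i hi => by
    have hne := mem_support_iff.mp hi
    generalize Q.coeff i = c at hne
    decide +revert
  conv_lhs => rw [as_sum_support Q]
  rw [← hsupp]
  exact sum_congr rfl fun i hi => by rw [hcoeff i hi, monomial_one_right_eq_X_pow]

theorem ZMod2.dvd_one_add_X_pow_of_natDegree_lt_card_support {Q : (ZMod 2)[X]}
    (hQ : Q.natDegree < #Q.support) : Q ∣ 1 + X ^ (Q.natDegree + 1) := by
  have hgeom := geom_sum_mul (X : (ZMod 2)[X]) (Q.natDegree + 1)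
  rw [← ZMod2.eq_geom_sum_of_natDegree_lt_card_support hQ, CharTwo.sub_eq_add,
    CharTwo.sub_eq_add, add_comm (X ^ _)] at hgeom
  exact Dvd.intro _ hgeom

theorem dvd_one_add_X_of_dvd_one_add_X_pow {R : Type*} [CommRing R] [CharP R 2] {Q : R[X]}
    {e : ℕ} (h₁ : Q ∣ 1 + X ^ (e + 1)) (h₂ : Q ∣ 1 + X ^ (2 * e + 1)) : Q ∣ 1 + X := by
  have hcomb : (1 + X : R[X]) = (1 + X ^ (e + 1)) ^ 2 + X * (1 + X ^ (2 * e + 1)) := by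
    linear_combination
      (-(X : R[X]) ^ (e + 1) - X ^ (2 * e + 2)) * CharTwo.two_eq_zero (R := R[X])
  rw [hcomb]
  exact dvd_add (dvd_pow h₁ two_ne_zero) (dvd_mul_of_dvd_right h₂ X)

theorem ZMod2.two_mul_card_support_le_or_two_mul_card_support_le {P Pstar : (ZMod 2)[X]}
    {D : ℕ} (hPP : P * Pstar = 1 + X ^ D) (hD : 4 ≤ D)
    (hmin : ∀ e : ℕ, 1 ≤ e → P ∣ 1 + X ^ e → D ≤ e) :
    2 * #P.support ≤ D ∨ 2 * #Pstar.support ≤ D := by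
  by_contra! hlarge
  have hPP0 : P * Pstar ≠ 0 := hPP ▸ one_add_X_pow_ne_zero (by omega)
  have hdeg : P.natDegree + Pstar.natDegree = D := by
    rw [← natDegree_mul (left_ne_zero_of_mul hPP0) (right_ne_zero_of_mul hPP0), hPP,
      natDegree_one_add_X_pow]
  have hP := card_supp_le_succ_natDegree P
  have hPstar := card_supp_le_succ_natDegree Pstar
  by_cases hshort : 2 * P.natDegree ≤ D
  · have hfull : P.natDegree < #P.support := by omega
    have := hmin _ (by omega) (ZMod2.dvd_one_add_X_pow_of_natDegree_lt_card_support hfull)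
    omega
  · have hfull : Pstar.natDegree < #Pstar.support := by omega
    have hodd : D = 2 * Pstar.natDegree + 1 := by omega
    have hdvd : Pstar ∣ 1 + X := dvd_one_add_X_of_dvd_one_add_X_pow
      (ZMod2.dvd_one_add_X_pow_of_natDegree_lt_card_support hfull)
      (hodd ▸ Dvd.intro_left P hPP)
    rw [← pow_one (X : (ZMod 2)[X])] at hdvd
    have := natDegree_le_of_dvd hdvd (one_add_X_pow_ne_zero one_pos)
    rw [natDegree_one_add_X_pow] at this
    omega

end Polynomial

section Reciprocal

variable {R : Type*} [CommRing R] {A B : R[X]} {D : ℕ} {G : PowerSeries R}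

theorem coe_eq_add_X_pow_mul_of_mul_eq (hAB : A * B = 1 + X ^ D)
    (hG : (A : PowerSeries R) * G = 1) : (B : PowerSeries R) = G + PowerSeries.X ^ D * G := by
  calc (B : PowerSeries R) = (A : PowerSeries R) * G * B := by rw [hG, one_mul]
    _ = ((A * B : R[X]) : PowerSeries R) * G := by rw [Polynomial.coe_mul]; ring
    _ = G + PowerSeries.X ^ D * G := by
      rw [hAB, Polynomial.coe_add, Polynomial.coe_one, Polynomial.coe_pow, Polynomial.coe_X]
      ring

theorem coeff_eq_coeff_add_ite_of_mul_eq (hAB : A * B = 1 + X ^ D)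
    (hG : (A : PowerSeries R) * G = 1) (n : ℕ) :
    B.coeff n = PowerSeries.coeff n G + if D ≤ n then PowerSeries.coeff (n - D) G else 0 := by
  rw [← coeff_coe, coe_eq_add_X_pow_mul_of_mul_eq hAB hG, map_add, PowerSeries.coeff_X_pow_mul']

theorem coeff_add_eq_of_mul_eq [IsDomain R] [CharP R 2] (hAB : A * B = 1 + X ^ D)
    (hD : 0 < D) (hG : (A : PowerSeries R) * G = 1) {n : ℕ} (hn : 0 < n) :
    PowerSeries.coeff (n + D) G = PowerSeries.coeff n G := by
  have hdeg : B.natDegree ≤ D := by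
    simpa only [natDegree_one_add_X_pow] using
      natDegree_le_of_dvd (Dvd.intro_left A hAB) (one_add_X_pow_ne_zero hD)
  have hcoeff := coeff_eq_coeff_add_ite_of_mul_eq hAB hG (n + D)
  rw [coeff_eq_zero_of_natDegree_lt (by omega), if_pos (by omega), Nat.add_sub_cancel] at hcoeff
  exact CharTwo.add_eq_zero.mp hcoeff.symm

end Reciprocal

section ReciprocalZModTwo

variable {A B : (ZMod 2)[X]} {D : ℕ} {G : PowerSeries (ZMod 2)}

theorem count_coeff_succ_eq_one_le_card_support (hAB : A * B = 1 + X ^ D)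
    (hG : (A : PowerSeries (ZMod 2)) * G = 1) :
    Nat.count (fun k => PowerSeries.coeff (k + 1) G = 1) D ≤ #B.support := by
  have hG0 : PowerSeries.constantCoeff G ≠ 0 :=
    right_ne_zero_of_mul_eq_one (by simpa using congrArg PowerSeries.constantCoeff hG)
  rw [Nat.count_eq_card_filter_range]
  refine card_le_card_of_injOn (fun k => if k + 1 = D then 0 else k + 1) (fun k hk => ?_) ?_
  · obtain ⟨hkD, hk1⟩ : k < D ∧ PowerSeries.coeff (k + 1) G = 1 := by simpa using hk
    rw [mem_coe, mem_support_iff, coeff_eq_coeff_add_ite_of_mul_eq hAB hG]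
    by_cases hlast : k + 1 = D
    · simpa [hlast, show D ≠ 0 by omega] using hG0
    · simp [hlast, hk1, show ¬D ≤ k + 1 by omega]
  · intro k _ l _ h
    simp only at h
    split_ifs at h <;> omega

theorem exists_density_coeff_eq_one_mul_le_card_support (hAB : A * B = 1 + X ^ D)
    (hD : 0 < D) (hG : (A : PowerSeries (ZMod 2)) * G = 1) :
    ∃ δ : ℝ, Tendsto (fun n : ℕ =>
        (#{k ∈ range (n + 1) | PowerSeries.coeff k G = 1} : ℝ) / (n + 1)) atTop (𝓝 δ) ∧
      δ * D ≤ #B.support := by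
  have hperiodic : Periodic (fun k => PowerSeries.coeff (k + 1) G = 1) D := fun k => by
    simp only [add_right_comm k D 1, coeff_add_eq_of_mul_eq hAB hD hG k.succ_pos]
  refine ⟨Nat.count (fun k => PowerSeries.coeff (k + 1) G = 1) D / D, ?_, ?_⟩
  · have := (Nat.tendsto_count_div_of_periodic_add (p := fun k => PowerSeries.coeff k G = 1)
      (N := 1) hperiodic hD).comp (tendsto_add_atTop_nat 1)
    simpa [comp_def, Nat.count_eq_card_filter_range] using this
  · rw [div_mul_cancel₀ _ (by positivity)]
    exact_mod_cast count_coeff_succ_eq_one_le_card_support hAB hG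

end ReciprocalZModTwo

theorem stmt11_general (P Pstar : Polynomial (ZMod 2))
    (D : ℕ) (hD4 : 4 ≤ D)
    (hDmin : ∀ e : ℕ, 1 ≤ e → P ∣ (1 + Polynomial.X ^ e) → D ≤ e)
    (hPstar : P * Pstar = 1 + Polynomial.X ^ D)
    (G Gstar : PowerSeries (ZMod 2))
    (hG : (P : PowerSeries (ZMod 2)) * G = 1)
    (hGstar : (Pstar : PowerSeries (ZMod 2)) * Gstar = 1) :
    ∃ δP δPstar : ℝ,
      Filter.Tendsto
        (fun n : ℕ =>
          (((Finset.range (n + 1)).filter fun k => PowerSeries.coeff k G = 1).card : ℝ)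
            / (n + 1)) Filter.atTop (nhds δP) ∧
      Filter.Tendsto
        (fun n : ℕ =>
          (((Finset.range (n + 1)).filter fun k =>
              PowerSeries.coeff k Gstar = 1).card : ℝ)
            / (n + 1)) Filter.atTop (nhds δPstar) ∧
      min δP δPstar ≤ 1 / 2 := by
  obtain ⟨δ, hδ, hδle⟩ :=
    exists_density_coeff_eq_one_mul_le_card_support hPstar (by omega) hG
  obtain ⟨δstar, hδstar, hδstarle⟩ := exists_density_coeff_eq_one_mul_le_card_support
    ((mul_comm Pstar P).trans hPstar) (by omega) hGstar
  refine ⟨δ, δstar, hδ, hδstar, ?_⟩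
  have hD : (0 : ℝ) < D := by positivity
  rcases ZMod2.two_mul_card_support_le_or_two_mul_card_support_le hPstar hD4 hDmin
    with hsmall | hsmall
  · have : (2 * #P.support : ℝ) ≤ D := by exact_mod_cast hsmall
    exact (min_le_right _ _).trans (by nlinarith)
  · have : (2 * #Pstar.support : ℝ) ≤ D := by exact_mod_cast hsmall
    exact (min_le_left _ _).trans (by nlinarith)

/-- Let `P ∈ F₂[q]` with `P(0) = 1`, suppose `D := ord(P) ≥ 4`, and let `P*` satisfy
`P ⬝ P* = 1 + q^D`.  If `G`, `Gstar` are the inverses in `F₂[[q]]` of `P`, `P*`, then the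
natural densities of the reciprocal sets `P̄ = {n : coeff n G = 1}` and
`P̄* = {n : coeff n Gstar = 1}` exist, and at least one of them is at most `1/2`. -/
theorem stmt11 (P Pstar : Polynomial (ZMod 2)) (hP0 : P.coeff 0 = 1)
    (D : ℕ) (hD4 : 4 ≤ D) (hDdvd : P ∣ (1 + Polynomial.X ^ D))
    (hDmin : ∀ e : ℕ, 1 ≤ e → P ∣ (1 + Polynomial.X ^ e) → D ≤ e)
    (hPstar : P * Pstar = 1 + Polynomial.X ^ D)
    (G Gstar : PowerSeries (ZMod 2))
    (hG : (P : PowerSeries (ZMod 2)) * G = 1)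
    (hGstar : (Pstar : PowerSeries (ZMod 2)) * Gstar = 1) :
    ∃ δP δPstar : ℝ,
      Filter.Tendsto
        (fun n : ℕ =>
          (((Finset.range (n + 1)).filter fun k => PowerSeries.coeff k G = 1).card : ℝ)
            / (n + 1)) Filter.atTop (nhds δP) ∧
      Filter.Tendsto
        (fun n : ℕ =>
          (((Finset.range (n + 1)).filter fun k =>
              PowerSeries.coeff k Gstar = 1).card : ℝ)
            / (n + 1)) Filter.atTop (nhds δPstar) ∧
      min δP δPstar ≤ 1 / 2 :=
  stmt11_general P Pstar D hD4 hDmin hPstar G Gstar hG hGstar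
end

section
/- Let m ≥ 1 and let A_m = {0} ∪ {2^{mn} : n ∈ ℕ}. Then the reciprocal set of A_m is Ā_m = { −1 + Σ_{i=0}^{m−1} x_i 2^{i + m·n_i} : x_i ∈ {0,1} not all zero, n_i ∈ ℕ }. That is, if F(q) = Σ_{a ∈ A_m} q^a ∈ F₂[[q]] and F̄ = Σ f̄_k q^k is its inverse, then f̄_k = 1 exactly when k belongs to the displayed set. (In particular, for m = 1 the reciprocal of {0} ∪ {2^n : n ∈ ℕ} is {2^n − 1 : n ∈ ℕ}.) -/
/-!
Over `𝔽₂` the Frobenius turns `F ^ 2 ^ i` into `F (q ^ 2 ^ i)`, whose support is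
`{0} ∪ {2 ^ (i + m n)}`; for `i = m` this gives `F ^ 2 ^ m = F + q`. Multiplying by `G = F⁻¹`,
`∏_{i < m} F ^ 2 ^ i = F ^ (2 ^ m - 1) = 1 + q G`. The coefficient of `q ^ s` in that product is
the parity of the number of ways to write `s = ∑ᵢ lᵢ` with `lᵢ ∈ {0} ∪ {2 ^ (i + m n)}`, and such a
representation is unique, since the binary digits of `lᵢ` all lie in the residue class of `i`
modulo `m`.
-/

open PowerSeries Finset

theorem PowerSeries.pow_prime_pow_eq_expand {p : ℕ} [Fact p.Prime] (T : PowerSeries (ZMod p))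
    (j : ℕ) : T ^ p ^ j = expand (p ^ j) (pow_ne_zero j (Fact.out : p.Prime).ne_zero) T := by
  rw [← MvPowerSeries.map_iterateFrobenius_expand p (Fact.out : p.Prime).ne_zero T j,
    Subsingleton.elim (iterateFrobenius (ZMod p) p j) (RingHom.id _), MvPowerSeries.map_id]
  rfl

theorem PowerSeries.coeff_pow_prime_pow {p : ℕ} [Fact p.Prime] (T : PowerSeries (ZMod p))
    (j k : ℕ) : coeff k (T ^ p ^ j) = if p ^ j ∣ k then coeff (k / p ^ j) T else 0 := by
  rw [pow_prime_pow_eq_expand, coeff_expand]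

theorem ZMod.eq_zero_of_ne_one_two {a : ZMod 2} (h : a ≠ 1) : a = 0 := by
  revert a; decide

theorem ZMod.eq_of_eq_one_iff_two {a b : ZMod 2} (h : a = 1 ↔ b = 1) : a = b := by
  revert a b; decide

theorem PowerSeries.ext_zmod_two {T U : PowerSeries (ZMod 2)}
    (h : ∀ k, coeff k T = 1 ↔ coeff k U = 1) : T = U := by
  ext k
  exact ZMod.eq_of_eq_one_iff_two (h k)

theorem PowerSeries.coeff_prod_eq_one_iff {ι : Type*} [Fintype ι] [DecidableEq ι]
    {f : ι → PowerSeries (ZMod 2)} {B : ι → Set ℕ} (hf : ∀ i k, coeff k (f i) = 1 ↔ k ∈ B i)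
    (hB : ∀ l l' : ι → ℕ, (∀ i, l i ∈ B i) → (∀ i, l' i ∈ B i) → ∑ i, l i = ∑ i, l' i → l = l')
    (s : ℕ) : coeff s (∏ i, f i) = 1 ↔ ∃ l : ι → ℕ, (∀ i, l i ∈ B i) ∧ ∑ i, l i = s := by
  classical
  have hcoeff : ∀ i k, coeff k (f i) = if k ∈ B i then 1 else 0 := fun i k => by
    split_ifs with hk
    · exact (hf i k).2 hk
    · exact ZMod.eq_zero_of_ne_one_two (mt (hf i k).1 hk)
  set T := {d ∈ finsuppAntidiag (univ : Finset ι) s | ∀ i, d i ∈ B i}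
  have hT : #T ≤ 1 := card_le_one.2 fun d hd d' hd' => by
    simp only [T, mem_filter, mem_finsuppAntidiag] at hd hd'
    exact DFunLike.coe_injective (hB d d' hd.2 hd'.2 (hd.1.1.trans hd'.1.1.symm))
  have hcard : coeff s (∏ i, f i) = #T := by
    simp only [coeff_prod, hcoeff, Finset.prod_boole, Finset.mem_univ, forall_const,
      Finset.sum_boole, T]
  have hne : T.Nonempty ↔ ∃ l : ι → ℕ, (∀ i, l i ∈ B i) ∧ ∑ i, l i = s := by
    constructor
    · rintro ⟨d, hd⟩
      simp only [T, mem_filter, mem_finsuppAntidiag] at hd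
      exact ⟨d, hd.2, hd.1.1⟩
    · rintro ⟨l, hl, hsum⟩
      refine ⟨Finsupp.equivFunOnFinite.symm l, ?_⟩
      simp [T, mem_finsuppAntidiag, hl, hsum]
  rw [hcard, ← hne, ← card_pos]
  interval_cases #T <;> simp

theorem Nat.filter_toFinset_bitIndices_sum {ι : Type*} [Fintype ι] [DecidableEq ι] (r : ℕ → ι)
    {l : ι → ℕ} (hl : ∀ i, ∀ e ∈ (l i).bitIndices, r e = i) (i : ι) :
    {e ∈ (∑ j, l j).bitIndices.toFinset | r e = i} = (l i).bitIndices.toFinset := by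
  set E : ι → Finset ℕ := fun j => (l j).bitIndices.toFinset
  have hE : ∀ j, ∀ e ∈ E j, r e = j := fun j e he => hl j e (List.mem_toFinset.1 he)
  have hdisj : ((univ : Finset ι) : Set ι).PairwiseDisjoint E := fun j _ j' _ hjj' =>
    disjoint_left.2 fun e he he' => hjj' ((hE j e he).symm.trans (hE j' e he'))
  have hsum : ∑ j, l j = ∑ e ∈ univ.biUnion E, 2 ^ e := by
    rw [sum_biUnion hdisj]
    exact sum_congr rfl fun j _ => (sum_toFinset_bitIndices_two_pow (l j)).symm
  ext e
  rw [hsum, toFinset_bitIndices_sum_two_pow, mem_filter, mem_biUnion]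
  constructor
  · rintro ⟨⟨j, -, hej⟩, rfl⟩
    rwa [hE j e hej]
  · exact fun he => ⟨⟨i, mem_univ i, he⟩, hE i e he⟩

theorem Nat.eq_of_sum_eq_of_bitIndices {ι : Type*} [Fintype ι] [DecidableEq ι] (r : ℕ → ι)
    {l l' : ι → ℕ} (hl : ∀ i, ∀ e ∈ (l i).bitIndices, r e = i)
    (hl' : ∀ i, ∀ e ∈ (l' i).bitIndices, r e = i) (h : ∑ i, l i = ∑ i, l' i) : l = l' := by
  funext i
  rw [← sum_toFinset_bitIndices_two_pow (l i), ← filter_toFinset_bitIndices_sum r hl, h,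
    filter_toFinset_bitIndices_sum r hl', sum_toFinset_bitIndices_two_pow]

theorem mul_prod_pow_two_pow {M : Type*} [CommMonoid M] (a : M) (m : ℕ) :
    a * ∏ i : Fin m, a ^ 2 ^ (i : ℕ) = a ^ 2 ^ m := by
  induction m with
  | zero => simp
  | succ m ih =>
    rw [Fin.prod_univ_castSucc, ← mul_assoc]
    simp only [Fin.val_castSucc, Fin.val_last, ih, ← pow_add, ← two_mul, pow_succ']

theorem mod_eq_of_mem_bitIndices {m i a e : ℕ} (hi : i < m)
    (ha : a = 0 ∨ ∃ n : ℕ, a = 2 ^ (i + m * n)) (he : e ∈ a.bitIndices) : e % m = i := by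
  obtain rfl | ⟨n, rfl⟩ := ha
  · simp at he
  · rw [Nat.bitIndices_two_pow, List.mem_singleton] at he
    rw [he, Nat.add_mul_mod_self_left, Nat.mod_eq_of_lt hi]

theorem eq_of_sum_eq_of_two_pow_mod {m : ℕ} (hm : 1 ≤ m) {l l' : Fin m → ℕ}
    (hl : ∀ i, l i = 0 ∨ ∃ n : ℕ, l i = 2 ^ ((i : ℕ) + m * n))
    (hl' : ∀ i, l' i = 0 ∨ ∃ n : ℕ, l' i = 2 ^ ((i : ℕ) + m * n))
    (h : ∑ i, l i = ∑ i, l' i) : l = l' :=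
  Nat.eq_of_sum_eq_of_bitIndices (fun e => ⟨e % m, Nat.mod_lt e hm⟩)
    (fun i _ he => Fin.ext (mod_eq_of_mem_bitIndices i.isLt (hl i) he))
    (fun i _ he => Fin.ext (mod_eq_of_mem_bitIndices i.isLt (hl' i) he)) h

theorem exists_sum_eq_succ_iff {ι : Type*} [Fintype ι] (g : ι → ℕ → ℕ) (s : ℕ) :
    (∃ l : ι → ℕ, (∀ i, l i = 0 ∨ ∃ n, l i = g i n) ∧ ∑ i, l i = s + 1) ↔
      ∃ x : ι → ℕ, (∀ i, x i ≤ 1) ∧ (∃ i, x i ≠ 0) ∧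
        ∃ ν : ι → ℕ, s + 1 = ∑ i, x i * g i (ν i) := by
  constructor
  · rintro ⟨l, hl, hsum⟩
    have hdigit : ∀ i, ∃ x ≤ 1, ∃ n, l i = x * g i n := fun i => by
      rcases hl i with h | ⟨n, h⟩
      · exact ⟨0, zero_le_one, 0, by simp [h]⟩
      · exact ⟨1, le_rfl, n, by simp [h]⟩
    choose x hx ν hν using hdigit
    refine ⟨x, hx, ?_, ν, hsum ▸ sum_congr rfl fun i _ => hν i⟩
    by_contra! hx0
    simp [hν, hx0] at hsum
  · rintro ⟨x, hx, -, ν, hsum⟩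
    refine ⟨fun i => x i * g i (ν i), fun i => ?_, hsum.symm⟩
    rcases Nat.le_one_iff_eq_zero_or_eq_one.1 (hx i) with h | h <;> simp [h]

section ReciprocalOfPowersOfTwo

variable {m : ℕ} {F : PowerSeries (ZMod 2)}
  (hF : ∀ k : ℕ, coeff k F = 1 ↔ (k = 0 ∨ ∃ n : ℕ, k = 2 ^ (m * n)))
include hF

theorem coeff_pow_two_pow_eq_one_iff (i k : ℕ) :
    coeff k (F ^ 2 ^ i) = 1 ↔ k = 0 ∨ ∃ n : ℕ, k = 2 ^ (i + m * n) := by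
  rw [coeff_pow_prime_pow]
  split_ifs with hk
  · obtain ⟨c, rfl⟩ := hk
    rw [Nat.mul_div_cancel_left _ (by positivity), hF]
    simp [pow_add]
  · simp only [zero_ne_one, false_iff, not_or, not_exists]
    exact ⟨fun h => hk (h ▸ dvd_zero _), fun n h => hk (h ▸ pow_dvd_pow 2 (Nat.le_add_right _ _))⟩

theorem pow_two_pow_eq_add_X (hm : 1 ≤ m) : F ^ 2 ^ m = F + X := by
  refine ext_zmod_two fun k => ?_
  rw [coeff_pow_two_pow_eq_one_iff hF, map_add, coeff_X]
  by_cases hk : k = 1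
  · subst hk
    rw [if_pos rfl, (hF 1).2 (Or.inr ⟨0, by simp⟩)]
    simp only [one_ne_zero, false_or, show (1 + 1 : ZMod 2) = 0 from rfl, zero_ne_one, iff_false,
      not_exists]
    exact fun n h => (Nat.one_lt_two_pow (by omega)).ne h
  · rw [if_neg hk, add_zero, hF]
    refine or_congr_right ⟨fun ⟨n, h⟩ => ⟨n + 1, by rw [h, mul_add_one, add_comm]⟩, ?_⟩
    rintro ⟨_ | n, h⟩
    · simp_all
    · exact ⟨n, by rw [h, mul_add_one, add_comm]⟩

theorem coeff_prod_pow_two_pow_eq_one_iff (hm : 1 ≤ m) (s : ℕ) :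
    coeff s (∏ i : Fin m, F ^ 2 ^ (i : ℕ)) = 1 ↔
      ∃ l : Fin m → ℕ, (∀ i, l i = 0 ∨ ∃ n : ℕ, l i = 2 ^ ((i : ℕ) + m * n)) ∧ ∑ i, l i = s :=
  coeff_prod_eq_one_iff (B := fun i : Fin m => {a | a = 0 ∨ ∃ n : ℕ, a = 2 ^ ((i : ℕ) + m * n)})
    (fun i => coeff_pow_two_pow_eq_one_iff hF i) (fun _ _ => eq_of_sum_eq_of_two_pow_mod hm) s

theorem prod_pow_two_pow_eq_one_add_X_mul (hm : 1 ≤ m) {G : PowerSeries (ZMod 2)}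
    (hFG : F * G = 1) : ∏ i : Fin m, F ^ 2 ^ (i : ℕ) = 1 + X * G := calc
  _ = G * (F * ∏ i : Fin m, F ^ 2 ^ (i : ℕ)) := by rw [← mul_assoc, mul_comm G, hFG, one_mul]
  _ = G * (F + X) := by rw [mul_prod_pow_two_pow, pow_two_pow_eq_add_X hF hm]
  _ = 1 + X * G := by rw [mul_add, mul_comm G F, hFG, mul_comm]

end ReciprocalOfPowersOfTwo

/-- Let `m ≥ 1` and let `F ∈ F₂[[q]]` be the generating function of
`A_m = {0} ∪ {2^{mn} : n ∈ ℕ}`, with inverse `G = Σ f̄_k q^k`.  Then `f̄_k = 1` exactly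
when `k = -1 + Σ_{i=0}^{m-1} x_i 2^{i + m nᵢ}` for some `x_i ∈ {0,1}` not all zero and
`nᵢ ∈ ℕ` (stated as `k + 1 = Σ_i x_i 2^{i + m nᵢ}` to stay in `ℕ`). -/
theorem stmt13 (m : ℕ) (hm : 1 ≤ m) (F G : PowerSeries (ZMod 2))
    (hF : ∀ k : ℕ, PowerSeries.coeff k F = 1 ↔ (k = 0 ∨ ∃ n : ℕ, k = 2 ^ (m * n)))
    (hFG : F * G = 1) :
    ∀ k : ℕ, PowerSeries.coeff k G = 1 ↔
      ∃ x : Fin m → ℕ, (∀ i, x i ≤ 1) ∧ (∃ i, x i ≠ 0) ∧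
        ∃ ν : Fin m → ℕ, k + 1 = ∑ i : Fin m, x i * 2 ^ ((i : ℕ) + m * ν i) := by
  intro k
  have hG : coeff k G = coeff (k + 1) (∏ i : Fin m, F ^ 2 ^ (i : ℕ)) := by
    rw [prod_pow_two_pow_eq_one_add_X_mul hF hm hFG, map_add, coeff_one, if_neg k.succ_ne_zero,
      zero_add, coeff_succ_X_mul]
  rw [hG, coeff_prod_pow_two_pow_eq_one_iff hF hm]
  exact exists_sum_eq_succ_iff (fun (i : Fin m) n => 2 ^ ((i : ℕ) + m * n)) k
end

section
/- Let F, F̄ ⊆ ℕ be reciprocal sets (each contains 0, and the product of their generating functions equals 1 in F₂[[q]]), with F ≠ {0}. Let r be the least positive integer belonging to F ∪ F̄. Then for every integer n ≥ r, |F ∩ [0,n]| + |F̄ ∩ [0,n]| ≥ 2 + ⌊log₂(n/r)⌋. -/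
/-- Let `F, F̄ ⊆ ℕ` be reciprocal sets (each containing `0`, with every positive integer
having an even number of representations `a + b`, `a ∈ F`, `b ∈ F̄`), with `F ≠ {0}`, and
let `r` be the least positive element of `F ∪ F̄`.  Then for every `n ≥ r`,
`|F ∩ [0,n]| + |F̄ ∩ [0,n]| ≥ 2 + ⌊log₂(n/r)⌋`. -/
theorem stmt14 (F Fbar : Set ℕ) (h0F : 0 ∈ F) (h0Fbar : 0 ∈ Fbar) (hFne : F ≠ {0})
    (hrec : ∀ n : ℕ, 1 ≤ n →
      Even (Set.ncard {p : ℕ × ℕ | p.1 ∈ F ∧ p.2 ∈ Fbar ∧ p.1 + p.2 = n}))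
    (r : ℕ) (hr1 : 1 ≤ r) (hrmem : r ∈ F ∪ Fbar)
    (hrmin : ∀ s : ℕ, 1 ≤ s → s ∈ F ∪ Fbar → r ≤ s) :
    ∀ n : ℕ, r ≤ n →
      2 + Nat.log 2 (n / r) ≤ (F ∩ Set.Iic n).ncard + (Fbar ∩ Set.Iic n).ncard := by
  classical
  -- If the representation set of some `n ≥ 1` is a singleton, contradiction with evenness.
  have hsingle : ∀ (n a b : ℕ), 1 ≤ n → a ∈ F → b ∈ Fbar → a + b = n →
      (∀ p : ℕ × ℕ, p.1 ∈ F → p.2 ∈ Fbar → p.1 + p.2 = n → p = (a, b)) → False := by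
    intro n a b hn haF hbB hab huniq
    have hset : {p : ℕ × ℕ | p.1 ∈ F ∧ p.2 ∈ Fbar ∧ p.1 + p.2 = n} = {(a, b)} := by
      ext p
      constructor
      · rintro ⟨h1, h2, h3⟩; exact huniq p h1 h2 h3
      · rintro rfl; exact ⟨haF, hbB, hab⟩
    have h := hrec n hn
    rw [hset, Set.ncard_singleton] at h
    simp at h
  -- r belongs to both sets
  have hrF : r ∈ F := by
    by_contra hrF
    have hrB : r ∈ Fbar := hrmem.resolve_left hrF
    refine hsingle r 0 r hr1 h0F hrB (zero_add r) ?_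
    intro p h1 h2 h3
    have hp1 : p.1 = 0 := by
      by_contra h
      have h1' : 1 ≤ p.1 := Nat.one_le_iff_ne_zero.mpr h
      have hge := hrmin p.1 h1' (Or.inl h1)
      have heq : p.1 = r := le_antisymm (by omega) hge
      exact hrF (heq ▸ h1)
    have hp2 : p.2 = r := by omega
    exact Prod.ext hp1 hp2
  have hrB : r ∈ Fbar := by
    by_contra hrB
    refine hsingle r r 0 hr1 hrF h0Fbar (add_zero r) ?_
    intro p h1 h2 h3
    have hp2 : p.2 = 0 := by
      by_contra h
      have h2' : 1 ≤ p.2 := Nat.one_le_iff_ne_zero.mpr h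
      have hge := hrmin p.2 h2' (Or.inr h2)
      have heq : p.2 = r := le_antisymm (by omega) hge
      exact hrB (heq ▸ h2)
    have hp1 : p.1 = r := by omega
    exact Prod.ext hp1 hp2
  -- gap lemma: F ∪ Fbar meets (m, 2m] for every m ≥ r
  have hgap : ∀ m : ℕ, r ≤ m → ∃ v, v ∈ F ∪ Fbar ∧ m < v ∧ v ≤ 2 * m := by
    intro m hm
    by_contra hno
    push_neg at hno
    set s := Nat.findGreatest (· ∈ F) m with hs_def
    set t := Nat.findGreatest (· ∈ Fbar) m with ht_def
    have hsr : r ≤ s := Nat.le_findGreatest hm hrF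
    have hsm : s ≤ m := Nat.findGreatest_le m
    have hsF : s ∈ F := Nat.findGreatest_spec (by omega) hrF
    have htr : r ≤ t := Nat.le_findGreatest hm hrB
    have htm : t ≤ m := Nat.findGreatest_le m
    have htB : t ∈ Fbar := Nat.findGreatest_spec (by omega) hrB
    have hFle : ∀ x, x ∈ F → x ≤ 2 * m → x ≤ s := by
      intro x hx hx2
      by_contra h
      push_neg at h
      rcases le_or_gt x m with hxm | hxm
      · exact (Nat.findGreatest_is_greatest h hxm) hx
      · have := hno x (Or.inl hx) hxm; omega
    have hBle : ∀ y, y ∈ Fbar → y ≤ 2 * m → y ≤ t := by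
      intro y hy hy2
      by_contra h
      push_neg at h
      rcases le_or_gt y m with hym | hym
      · exact (Nat.findGreatest_is_greatest h hym) hy
      · have := hno y (Or.inr hy) hym; omega
    refine hsingle (s + t) s t (by omega) hsF htB rfl ?_
    intro p h1 h2 h3
    have hp1 : p.1 ≤ s := hFle p.1 h1 (by omega)
    have hp2 : p.2 ≤ t := hBle p.2 h2 (by omega)
    exact Prod.ext (by omega) (by omega)
  have hfinF : ∀ n : ℕ, (F ∩ Set.Iic n).Finite :=
    fun n => (Set.finite_Iic n).subset Set.inter_subset_right
  have hfinB : ∀ n : ℕ, (Fbar ∩ Set.Iic n).Finite :=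
    fun n => (Set.finite_Iic n).subset Set.inter_subset_right
  -- main induction
  have main : ∀ L : ℕ, ∀ n : ℕ, r * 2 ^ L ≤ n →
      2 + L ≤ (F ∩ Set.Iic n).ncard + (Fbar ∩ Set.Iic n).ncard := by
    intro L
    induction L with
    | zero =>
      intro n hn
      simp only [pow_zero, mul_one] at hn
      have h1 : 0 < (F ∩ Set.Iic n).ncard :=
        (Set.ncard_pos (hfinF n)).mpr ⟨0, h0F, by simp⟩
      have h2 : 0 < (Fbar ∩ Set.Iic n).ncard :=
        (Set.ncard_pos (hfinB n)).mpr ⟨0, h0Fbar, by simp⟩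
      omega
    | succ L ih =>
      intro n hn
      have h2L : 1 ≤ 2 ^ L := Nat.one_le_two_pow
      have hpow : r * 2 ^ (L + 1) = 2 * (r * 2 ^ L) := by ring
      set m := r * 2 ^ L with hm_def
      have hrm : r ≤ m := by
        calc r = r * 1 := (mul_one r).symm
        _ ≤ r * 2 ^ L := Nat.mul_le_mul_left r h2L
      obtain ⟨v, hvS, hvm, hv2m⟩ := hgap m hrm
      have hvn : v ≤ n := by omega
      have hmn : m ≤ n := by omega
      have ihm := ih m le_rfl
      have hmonoB : (Fbar ∩ Set.Iic m).ncard ≤ (Fbar ∩ Set.Iic n).ncard :=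
        Set.ncard_le_ncard (Set.inter_subset_inter_right _ (Set.Iic_subset_Iic.mpr hmn)) (hfinB n)
      have hmonoF : (F ∩ Set.Iic m).ncard ≤ (F ∩ Set.Iic n).ncard :=
        Set.ncard_le_ncard (Set.inter_subset_inter_right _ (Set.Iic_subset_Iic.mpr hmn)) (hfinF n)
      rcases hvS with hvF | hvB
      · have hvnot : v ∉ F ∩ Set.Iic m := fun h => by
          have := h.2; simp only [Set.mem_Iic] at this; omega
        have hins : insert v (F ∩ Set.Iic m) ⊆ F ∩ Set.Iic n := by
          intro x hx
          rcases hx with rfl | hx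
          · exact ⟨hvF, Set.mem_Iic.mpr hvn⟩
          · exact ⟨hx.1, Set.mem_Iic.mpr (le_trans (Set.mem_Iic.mp hx.2) hmn)⟩
        have hcard : (F ∩ Set.Iic m).ncard + 1 ≤ (F ∩ Set.Iic n).ncard := by
          have := Set.ncard_le_ncard hins (hfinF n)
          rwa [Set.ncard_insert_of_notMem hvnot (hfinF m)] at this
        omega
      · have hvnot : v ∉ Fbar ∩ Set.Iic m := fun h => by
          have := h.2; simp only [Set.mem_Iic] at this; omega
        have hins : insert v (Fbar ∩ Set.Iic m) ⊆ Fbar ∩ Set.Iic n := by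
          intro x hx
          rcases hx with rfl | hx
          · exact ⟨hvB, Set.mem_Iic.mpr hvn⟩
          · exact ⟨hx.1, Set.mem_Iic.mpr (le_trans (Set.mem_Iic.mp hx.2) hmn)⟩
        have hcard : (Fbar ∩ Set.Iic m).ncard + 1 ≤ (Fbar ∩ Set.Iic n).ncard := by
          have := Set.ncard_le_ncard hins (hfinB n)
          rwa [Set.ncard_insert_of_notMem hvnot (hfinB m)] at this
        omega
  intro n hn
  have hL : r * 2 ^ Nat.log 2 (n / r) ≤ n := by
    have hdiv : 1 ≤ n / r := (Nat.one_le_div_iff (by omega)).mpr hn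
    have h1 : 2 ^ Nat.log 2 (n / r) ≤ n / r := Nat.pow_log_le_self 2 (by omega)
    calc r * 2 ^ Nat.log 2 (n / r) ≤ r * (n / r) := Nat.mul_le_mul_left r h1
      _ = n / r * r := mul_comm _ _
      _ ≤ n := Nat.div_mul_le_self n r
  exact main _ n hL
end

section
/- Let c₁, c₂ be integers with gcd(c₁, c₂) = 1, and define f : ℤ → ℤ by f(n) = c₁n + c₂·n(n−1)/2. Then the following are equivalent: (i) c₂ ≢ 2 (mod 4); (ii) for every j ≥ 1 and every residue a modulo 2^j, lim_{N→∞} #{n ∈ ℤ : −N ≤ n ≤ N, f(n) ≡ a (mod 2^j)} / (2N+1) = 2^{−j}, i.e. the values f(n) are uniformly distributed modulo every power of 2. -/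
/-!
Write `f = binomialQuadratic c₁ c₂`. The identity `2 (f x - f y) = (x - y) (2 c₁ + c₂ (x + y - 1))`
shows that `f mod 2^j` has period `2^(j+1)`, and that for `c₂ ≢ 2 (mod 4)` the solutions of
`f y ≡ f x (mod 2^j)` lie in at most two classes modulo `2^(j+1)`: for odd `c₂` exactly one of
`y - x`, `y + x - 1` is odd, while for `4 ∣ c₂` (so `c₁` is odd) the second factor is twice an odd
number. As `2^(j+1)` residues map to `2^j` values, every fibre then has exactly two elements,
and each class modulo `2^j` has density `2 / 2^(j+1)`. Conversely, if `c₂ ≡ 2 (mod 4)` then `c₁`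
is odd and `f n ≡ n (n + c₁ - 1) (mod 4)`, which is never `2 (mod 4)`.
-/

open Finset Filter Topology

theorem Finset.card_filter_eq_of_card_eq_mul {α β : Type*} [DecidableEq β] {s : Finset α}
    {t : Finset β} {g : α → β} (hg : Set.MapsTo g s t) {k : ℕ} (hs : #s = #t * k)
    (hle : ∀ b ∈ t, #{a ∈ s | g a = b} ≤ k) {b : β} (hb : b ∈ t) : #{a ∈ s | g a = b} = k := by
  have hsum : ∑ b ∈ t, #{a ∈ s | g a = b} = ∑ _b ∈ t, k := by
    rw [← card_eq_sum_card_fiberwise hg, sum_const, smul_eq_mul, hs]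
  exact (sum_eq_sum_iff_of_le hle).1 hsum b hb

namespace Int

theorem abs_card_Ioc_filter_modEq_sub_le {M : ℤ} (hM : 0 < M) {a b : ℤ} (hab : a ≤ b) (r : ℤ) :
    |(#{n ∈ Ioc a b | n ≡ r [ZMOD M]} : ℚ) - (b - a) / M| ≤ 1 := by
  have hmono : ⌊(a - r) / (M : ℚ)⌋ ≤ ⌊(b - r) / (M : ℚ)⌋ := by gcongr
  have hcard := Int.Ioc_filter_modEq_card a b hM r
  rw [max_eq_left (sub_nonneg.2 hmono)] at hcard
  rw [← Int.cast_natCast, hcard]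
  have hdiff : (b - a) / (M : ℚ) = (b - r) / M - (a - r) / M := by ring
  have h₁ := Int.floor_le ((b - r) / (M : ℚ))
  have h₂ := Int.lt_floor_add_one ((b - r) / (M : ℚ))
  have h₃ := Int.floor_le ((a - r) / (M : ℚ))
  have h₄ := Int.lt_floor_add_one ((a - r) / (M : ℚ))
  push_cast
  rw [abs_le, hdiff]
  constructor <;> linarith

theorem card_filter_eq_sum_card_filter_modEq {p : ℤ → Prop} [DecidablePred p] {M : ℤ}
    (hM : 0 < M) (hp : Function.Periodic p M) (s : Finset ℤ) :
    #{n ∈ s | p n} = ∑ r ∈ Ico 0 M with p r, #{n ∈ s | n ≡ r [ZMOD M]} := by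
  have hmod : ∀ n, p (n % M) ↔ p n := fun n => by
    rw [Int.emod_def, mul_comm M]
    simpa using hp.sub_int_mul_eq (x := n) (n / M)
  rw [card_eq_sum_card_fiberwise (f := (· % M)) (t := {r ∈ Ico 0 M | p r})]
  · refine sum_congr rfl fun r hr => ?_
    rw [mem_filter, mem_Ico] at hr
    rw [filter_filter]
    congr 1
    refine filter_congr fun n _ => ?_
    rw [Int.ModEq, Int.emod_eq_of_lt hr.1.1 hr.1.2]
    exact ⟨fun h => h.2, fun h => ⟨(hmod n).1 (h ▸ hr.2), h⟩⟩
  · intro n hn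
    simp only [coe_filter, Set.mem_ofPred_eq, mem_Ico] at hn ⊢
    exact ⟨⟨Int.emod_nonneg n hM.ne', Int.emod_lt_of_pos n hM⟩, (hmod n).2 hn.2⟩

theorem tendsto_ncard_div_of_periodic {p : ℤ → Prop} [DecidablePred p] {M : ℤ} (hM : 0 < M)
    (hp : Function.Periodic p M) :
    Tendsto (fun N : ℕ => (Set.ncard {n : ℤ | -(N : ℤ) ≤ n ∧ n ≤ N ∧ p n} : ℝ) / (2 * N + 1))
      atTop (𝓝 ((#{r ∈ Ico 0 M | p r} : ℝ) / M)) := by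
  set c : ℕ := #{r ∈ Ico 0 M | p r}
  have hncard : ∀ N : ℕ, Set.ncard {n : ℤ | -(N : ℤ) ≤ n ∧ n ≤ N ∧ p n}
      = #{n ∈ Ioc (-(N : ℤ) - 1) N | p n} := fun N => by
    rw [← Set.ncard_coe_finset]
    congr 1
    ext n
    simp only [Set.mem_ofPred_eq, coe_filter, mem_Ioc]
    rw [Int.sub_one_lt_iff, and_assoc]
  have hdev : ∀ N : ℕ, |(#{n ∈ Ioc (-(N : ℤ) - 1) N | p n} : ℝ) - c * ((2 * N + 1) / M)| ≤ c :=
    fun N => by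
    rw [card_filter_eq_sum_card_filter_modEq hM hp, Nat.cast_sum, ← nsmul_eq_mul,
      ← sum_const, ← sum_sub_distrib]
    refine (abs_sum_le_sum_abs _ _).trans ?_
    refine (sum_le_card_nsmul _ _ 1 fun r _ => ?_).trans (by simp [c])
    have h := abs_card_Ioc_filter_modEq_sub_le hM (by omega : -(N : ℤ) - 1 ≤ N) r
    have hlength : ((N : ℤ) : ℚ) - ((-(N : ℤ) - 1 : ℤ) : ℚ) = 2 * N + 1 := by push_cast; ring
    rw [hlength] at h
    exact_mod_cast h
  rw [← tendsto_sub_nhds_zero_iff]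
  refine squeeze_zero_norm (a := fun N : ℕ => (c : ℝ) / (2 * N + 1)) (fun N => ?_) ?_
  · have hN : (0 : ℝ) < 2 * N + 1 := by positivity
    have hsplit : ∀ C : ℝ, C / (2 * N + 1) - c / M = (C - c * ((2 * N + 1) / M)) / (2 * N + 1) :=
      fun C => by field_simp
    rw [hncard, Real.norm_eq_abs, hsplit, abs_div, abs_of_pos hN]
    gcongr
    exact hdev N
  · exact tendsto_const_nhds.div_atTop (tendsto_atTop_add_const_right _ _
      (tendsto_natCast_atTop_atTop.const_mul_atTop two_pos))

theorem card_Ico_filter_le_two {M α β : ℤ} {q : ℤ → Prop} [DecidablePred q]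
    (h : ∀ y, q y → y ≡ α [ZMOD M] ∨ y ≡ β [ZMOD M]) : #{y ∈ Ico 0 M | q y} ≤ 2 := by
  have hsub : {y ∈ Ico 0 M | q y} ⊆ {α % M, β % M} := fun y hy => by
    rw [mem_filter, mem_Ico] at hy
    rw [mem_insert, mem_singleton, ← emod_eq_of_lt hy.1.1 hy.1.2]
    exact h y hy.2
  exact (card_le_card hsub).trans card_le_two

theorem odd_of_gcd_eq_one_of_even {a b : ℤ} (h : Int.gcd a b = 1) (hb : Even b) : Odd a := by
  by_contra ha
  have h2 : (2 : ℤ) ∣ (Int.gcd a b : ℤ) :=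
    dvd_coe_gcd (not_odd_iff_even.1 ha).two_dvd hb.two_dvd
  rw [h] at h2
  norm_num at h2

theorem isCoprime_two_pow_of_odd {t : ℤ} (ht : Odd t) (k : ℕ) : IsCoprime ((2 : ℤ) ^ k) t :=
  (isCoprime_two_left.2 ht).pow_left

end Int

def binomialQuadratic (c₁ c₂ n : ℤ) : ℤ := c₁ * n + c₂ * (n * (n - 1) / 2)

namespace binomialQuadratic

variable {c₁ c₂ : ℤ}

theorem two_mul_sub (x y : ℤ) :
    2 * (binomialQuadratic c₁ c₂ x - binomialQuadratic c₁ c₂ y)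
      = (x - y) * (2 * c₁ + c₂ * (x + y - 1)) := by
  have hx := Int.two_mul_ediv_two_of_even (Int.even_mul_pred_self x)
  have hy := Int.two_mul_ediv_two_of_even (Int.even_mul_pred_self y)
  unfold binomialQuadratic
  linear_combination c₂ * hx - c₂ * hy

theorem modEq_iff {m x y : ℤ} :
    binomialQuadratic c₁ c₂ x ≡ binomialQuadratic c₁ c₂ y [ZMOD m]
      ↔ 2 * m ∣ (y - x) * (2 * c₁ + c₂ * (y + x - 1)) := by
  rw [Int.modEq_iff_dvd, ← two_mul_sub, mul_dvd_mul_iff_left two_ne_zero]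

theorem add_two_mul_modEq (m n : ℤ) :
    binomialQuadratic c₁ c₂ (n + 2 * m) ≡ binomialQuadratic c₁ c₂ n [ZMOD m] :=
  modEq_iff.2 ⟨-(2 * c₁ + c₂ * (n + (n + 2 * m) - 1)), by ring⟩

theorem modEq_or_modEq_of_odd (hc₂ : Odd c₂) (j : ℕ) :
    ∃ β, ∀ x y, binomialQuadratic c₁ c₂ x ≡ binomialQuadratic c₁ c₂ y [ZMOD 2 ^ j] →
      y ≡ x [ZMOD 2 ^ (j + 1)] ∨ y ≡ β - x [ZMOD 2 ^ (j + 1)] := by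
  obtain ⟨u, v, huv⟩ := Int.isCoprime_two_pow_of_odd hc₂ (j + 1)
  refine ⟨1 - 2 * c₁ * v, fun x y hxy => ?_⟩
  rw [modEq_iff, ← pow_succ'] at hxy
  rcases Int.even_or_odd (y - x) with hyx | hyx
  · -- `(y - x) + (y + x - 1)` is odd, so exactly one of the two factors is odd
    have hA : Odd (2 * c₁ + c₂ * (y + x - 1)) := by
      have : Odd (y + x - 1) := by
        convert hyx.add_odd (odd_two_mul_add_one (x - 1)) using 1; ring
      exact (even_two_mul c₁).add_odd (hc₂.mul this)
    left
    exact (Int.modEq_iff_dvd.2 ((Int.isCoprime_two_pow_of_odd hA _).dvd_of_dvd_mul_right hxy)).symm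
  · right
    obtain ⟨k, hk⟩ := (Int.isCoprime_two_pow_of_odd hyx _).dvd_of_dvd_mul_left hxy
    exact Int.modEq_iff_dvd.2 ⟨-(v * k) - u * (y + x - 1),
      by linear_combination -v * hk + (y + x - 1) * huv⟩

theorem modEq_or_modEq_of_four_dvd (hc₁ : Odd c₁) (hc₂ : 4 ∣ c₂) (j : ℕ) {x y : ℤ}
    (hxy : binomialQuadratic c₁ c₂ x ≡ binomialQuadratic c₁ c₂ y [ZMOD 2 ^ j]) :
    y ≡ x [ZMOD 2 ^ (j + 1)] ∨ y ≡ x + 2 ^ j [ZMOD 2 ^ (j + 1)] := by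
  obtain ⟨e, rfl⟩ := hc₂
  have hB : Odd (c₁ + 2 * (e * (y + x - 1))) := hc₁.add_even (even_two_mul _)
  have hfactor : (y - x) * (2 * c₁ + 4 * e * (y + x - 1))
      = 2 * ((y - x) * (c₁ + 2 * (e * (y + x - 1)))) := by ring
  rw [modEq_iff, hfactor, mul_dvd_mul_iff_left two_ne_zero] at hxy
  obtain ⟨k, hk⟩ := (Int.isCoprime_two_pow_of_odd hB j).dvd_of_dvd_mul_right hxy
  rcases Int.even_or_odd k with ⟨l, rfl⟩ | ⟨l, rfl⟩
  · left
    exact Int.modEq_iff_dvd.2 ⟨-l, by rw [pow_succ]; linear_combination -hk⟩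
  · right
    exact Int.modEq_iff_dvd.2 ⟨-l, by rw [pow_succ]; linear_combination -hk⟩

theorem periodic_modEq (a m : ℤ) :
    Function.Periodic (fun n => binomialQuadratic c₁ c₂ n ≡ a [ZMOD m]) (2 * m) := fun n =>
  propext ⟨(add_two_mul_modEq m n).symm.trans, (add_two_mul_modEq m n).trans⟩

theorem exists_modEq_or_modEq (h : Int.gcd c₁ c₂ = 1) (hc₂ : ¬c₂ ≡ 2 [ZMOD 4]) (j : ℕ) (b : ℤ) :
    ∃ α β, ∀ y, binomialQuadratic c₁ c₂ y ≡ b [ZMOD 2 ^ j] →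
      y ≡ α [ZMOD 2 ^ (j + 1)] ∨ y ≡ β [ZMOD 2 ^ (j + 1)] := by
  by_cases hb : ∃ x, binomialQuadratic c₁ c₂ x ≡ b [ZMOD 2 ^ j]
  swap
  · exact ⟨0, 0, fun y hy => (hb ⟨y, hy⟩).elim⟩
  obtain ⟨x, hx⟩ := hb
  rcases Int.even_or_odd c₂ with hev | hodd
  · have h4 : 4 ∣ c₂ := by
      obtain ⟨r, hr⟩ := hev
      unfold Int.ModEq at hc₂
      omega
    exact ⟨x, x + 2 ^ j, fun y hy => modEq_or_modEq_of_four_dvd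
      (Int.odd_of_gcd_eq_one_of_even h hev) h4 j (hx.trans hy.symm)⟩
  · obtain ⟨β, hβ⟩ := modEq_or_modEq_of_odd (c₁ := c₁) hodd j
    exact ⟨x, β - x, fun y hy => hβ x y (hx.trans hy.symm)⟩

theorem card_filter_modEq (h : Int.gcd c₁ c₂ = 1) (hc₂ : ¬c₂ ≡ 2 [ZMOD 4]) (j : ℕ) (a : ℤ) :
    #{r ∈ Ico 0 (2 ^ (j + 1)) | binomialQuadratic c₁ c₂ r ≡ a [ZMOD 2 ^ j]} = 2 := by
  have hm : (0 : ℤ) < 2 ^ j := by positivity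
  have hmem : ∀ n : ℤ, n % 2 ^ j ∈ Ico 0 (2 ^ j) := fun n =>
    mem_Ico.2 ⟨Int.emod_nonneg n hm.ne', Int.emod_lt_of_pos n hm⟩
  refine card_filter_eq_of_card_eq_mul (g := fun r => binomialQuadratic c₁ c₂ r % 2 ^ j)
    (fun r _ => hmem _) ?_ (fun b hb => ?_) (hmem a)
  · simp only [Int.card_Ico, pow_succ]
    omega
  · obtain ⟨α, β, hαβ⟩ := exists_modEq_or_modEq h hc₂ j b
    refine Int.card_Ico_filter_le_two (α := α) (β := β) fun y hy => hαβ y ?_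
    rw [mem_Ico] at hb
    rw [Int.ModEq, hy, Int.emod_eq_of_lt hb.1 hb.2]

theorem not_modEq_two (hc₁ : Odd c₁) (hc₂ : c₂ ≡ 2 [ZMOD 4]) (n : ℤ) :
    ¬binomialQuadratic c₁ c₂ n ≡ 2 [ZMOD 4] := by
  intro hn
  obtain ⟨t, rfl⟩ := hc₁
  obtain ⟨T, hT⟩ := Int.even_mul_pred_self n
  rw [← two_mul] at hT
  have hT' : (n : ZMod 4) * (n - 1) = 2 * T := by exact_mod_cast congrArg (Int.cast : ℤ → ZMod 4) hT
  have h2 : (c₂ : ZMod 4) = 2 := (ZMod.intCast_eq_intCast_iff _ _ 4).2 hc₂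
  have hf := (ZMod.intCast_eq_intCast_iff _ _ 4).2 hn
  rw [binomialQuadratic, hT, Int.mul_ediv_cancel_left _ two_ne_zero] at hf
  push_cast at hf
  rw [h2, ← hT'] at hf
  revert hf
  generalize (n : ZMod 4) = N
  generalize (t : ZMod 4) = τ
  revert N τ
  decide

end binomialQuadratic

/-- For coprime integers `c₁, c₂` and `f(n) = c₁ n + c₂ n(n-1)/2`, the values `f(n)` are
uniformly distributed modulo every power of `2` if and only if `c₂ ≢ 2 (mod 4)`. -/
theorem stmt15 (c₁ c₂ : ℤ) (h : Int.gcd c₁ c₂ = 1) :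
    (¬ c₂ ≡ 2 [ZMOD 4]) ↔
      ∀ j : ℕ, 1 ≤ j → ∀ a : ℤ,
        Filter.Tendsto
          (fun N : ℕ =>
            (Set.ncard {n : ℤ | -(N : ℤ) ≤ n ∧ n ≤ (N : ℤ) ∧
              c₁ * n + c₂ * (n * (n - 1) / 2) ≡ a [ZMOD 2 ^ j]} : ℝ) / (2 * N + 1))
          Filter.atTop (nhds (1 / 2 ^ j)) := by
  constructor
  · intro hc₂ j _ a
    have hper := binomialQuadratic.periodic_modEq (c₁ := c₁) (c₂ := c₂) a (2 ^ j)
    rw [← pow_succ'] at hper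
    have hlim := Int.tendsto_ncard_div_of_periodic (by positivity) hper
    rw [binomialQuadratic.card_filter_modEq h hc₂] at hlim
    have hval : ((2 : ℕ) : ℝ) / ((2 ^ (j + 1) : ℤ) : ℝ) = 1 / 2 ^ j := by
      push_cast
      rw [pow_succ]
      field_simp
    rwa [hval] at hlim
  · intro H hc₂
    have hc₁ : Odd c₁ := Int.odd_of_gcd_eq_one_of_even h (by
      rw [Int.even_iff]
      unfold Int.ModEq at hc₂
      omega)
    have hempty (N : ℕ) : {n : ℤ | -(N : ℤ) ≤ n ∧ n ≤ (N : ℤ) ∧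
        c₁ * n + c₂ * (n * (n - 1) / 2) ≡ 2 [ZMOD 2 ^ 2]} = ∅ :=
      Set.eq_empty_of_forall_notMem fun n hn => binomialQuadratic.not_modEq_two hc₁ hc₂ n hn.2.2
    have h0 := H 2 one_le_two 2
    simp only [hempty, Set.ncard_empty, Nat.cast_zero, zero_div] at h0
    norm_num at h0
end
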